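/- Let n ≥ 1 and let γₙ : [0, bₙ] → ℝ × ℝⁿ be future-directed causal curves parametrized by Euclidean arclength, with γₙ(0) → x, γₙ(bₙ) → z and bₙ → b ∈ (0, +∞). Then there exist a subsequence γₖ and a future-directed causal curve γ : [0, b] → ℝ × ℝⁿ with γ(0) = x and γ(b) = z such that sup_{t ∈ [0, min(b, bₖ)]} ‖γ(t) − γₖ(t)‖ → 0 as k → ∞, and limsup_{k→∞} L(γₖ) ≤ L(γ). In particular z − x ∈ C and z ≠ x. (This is the Minkowski-space instance of the first bullet of case (2) of the paper's main Theorem 3.1.) -/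

import Mathlib

open Filter Set
open scoped BigOperators ENNReal

noncomputable section

/-- Minkowski space modeled as `ℝ × ℝⁿ` with the Euclidean norm,
i.e. `EuclideanSpace ℝ (Fin (n+1))` with time component `x 0`. -/
abbrev Mink (n : ℕ) : Type := EuclideanSpace ℝ (Fin (n + 1))

/-- The closed future causal cone `C = {x : x⁰ ≥ ‖x̄‖}`. -/
def causalCone (n : ℕ) : Set (Mink n) :=
  {x | Real.sqrt (∑ i : Fin n, x i.succ ^ 2) ≤ x 0}

/-- The Lorentzian quadratic form `q(x) = (x⁰)² − ‖x̄‖²`. -/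
def qform (n : ℕ) (x : Mink n) : ℝ :=
  x 0 ^ 2 - ∑ i : Fin n, x i.succ ^ 2

/-- `γ` is a future-directed causal curve on the set `s`. -/
def FDCausal (n : ℕ) (γ : ℝ → Mink n) (s : Set ℝ) : Prop :=
  ∀ ⦃t₁⦄, t₁ ∈ s → ∀ ⦃t₂⦄, t₂ ∈ s → t₁ < t₂ →
    γ t₂ - γ t₁ ∈ causalCone n ∧ γ t₂ ≠ γ t₁

/-- The Lorentzian length of `γ` on `[a, b]`: the infimum over finite partitions
`a = t₀ < t₁ < ⋯ < t_m = b` of `Σᵢ √(q(γ(tᵢ₊₁) − γ(tᵢ)))`. -/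
def LLength (n : ℕ) (γ : ℝ → Mink n) (a b : ℝ) : ℝ :=
  sInf { L : ℝ | ∃ (m : ℕ) (t : Fin (m + 1) → ℝ), StrictMono t ∧ t 0 = a ∧
    t (Fin.last m) = b ∧
    L = ∑ i : Fin m, Real.sqrt (qform n (γ (t i.succ) - γ (t i.castSucc))) }

/-!
Arclength parametrization makes the curves 1-Lipschitz, so after stopping each curve at the ends of
its interval, Arzelà–Ascoli yields a uniformly convergent subsequence. A causal vector satisfies
`‖y‖ ≤ √2 y⁰`, so along an arclength-parametrized causal curve the time coordinate grows at least
like `(t₂ - t₁) / √2`. This bound and the closedness of the cone pass to the limit, which is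
therefore future-directed causal. The Lorentzian length is an infimum of partition sums that depend
continuously on finitely many points of the curve, hence it is upper semicontinuous.
-/

open Topology Metric BoundedContinuousFunction
open scoped NNReal

theorem eVariationOn_le_of_edist_le {α E F : Type*} [LinearOrder α] [PseudoEMetricSpace E]
    [PseudoEMetricSpace F] {f : α → E} {g : α → F} {s : Set α}
    (h : ∀ x ∈ s, ∀ y ∈ s, x ≤ y → edist (f x) (f y) ≤ edist (g x) (g y)) :
    eVariationOn f s ≤ eVariationOn g s :=
  iSup_le fun ⟨_, u, hu, us⟩ =>
    (Finset.sum_le_sum fun i _ => by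
      simpa only [edist_comm] using h _ (us i) _ (us (i + 1)) (hu (Nat.le_succ i))).trans
      (eVariationOn.sum_le hu us)

theorem exists_subseq_tendstoUniformlyOn_of_lipschitzOnWith {α E : Type*} [PseudoMetricSpace α]
    [MetricSpace E] {K : Set α} (hK : IsCompact K) {s : Set E} (hs : IsCompact s)
    {g : ℕ → α → E} {L : ℝ≥0} (hlip : ∀ m, LipschitzOnWith L (g m) K)
    (hmaps : ∀ m, MapsTo (g m) K s) :
    ∃ φ : ℕ → ℕ, StrictMono φ ∧ ∃ f : α → E, TendstoUniformlyOn (fun k => g (φ k)) f atTop K := by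
  have : CompactSpace K := isCompact_iff_compactSpace.1 hK
  let G : ℕ → K →ᵇ E := fun m =>
    .mkOfCompact ⟨fun t => g m t, (hlip m).to_restrict.continuous⟩
  have hequi : Equicontinuous ((↑) : range G → K → E) :=
    (LipschitzWith.uniformEquicontinuous _ L
      (by rintro ⟨_, m, rfl⟩; exact (hlip m).to_restrict)).equicontinuous
  obtain ⟨F, -, φ, hφ, hF⟩ := (BoundedContinuousFunction.arzela_ascoli s hs (range G)
    (by rintro _ t ⟨m, rfl⟩; exact hmaps m t.2) hequi).tendsto_subseq
    fun m => subset_closure (mem_range_self m)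
  refine ⟨φ, hφ, Function.extend Subtype.val F (g 0), ?_⟩
  rw [tendstoUniformlyOn_iff_tendstoUniformly_comp_coe, Function.extend_comp Subtype.val_injective]
  exact BoundedContinuousFunction.tendsto_iff_tendstoUniformly.1 hF

theorem Filter.Tendsto.congr_dist_of_lipschitzWith {α E ι : Type*} [PseudoMetricSpace α]
    [PseudoMetricSpace E] {g : ι → α → E} {K : ℝ≥0} (hlip : ∀ k, LipschitzWith K (g k))
    {l : Filter ι} {β β' : ι → α} {y : E} (hg : Tendsto (fun k => g k (β k)) l (𝓝 y))
    (hββ' : Tendsto (fun k => dist (β k) (β' k)) l (𝓝 0)) :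
    Tendsto (fun k => g k (β' k)) l (𝓝 y) :=
  hg.congr_dist (squeeze_zero (fun _ => dist_nonneg) (fun k => (hlip k).dist_le_mul _ _)
    (by simpa using hββ'.const_mul (K : ℝ)))

def IsArclengthParam {E : Type*} [PseudoEMetricSpace E] (γ : ℝ → E) (s : Set ℝ) : Prop :=
  ∀ ⦃u v⦄, u ∈ s → v ∈ s → u ≤ v → eVariationOn γ (Icc u v) = ENNReal.ofReal (v - u)

namespace IsArclengthParam

variable {E : Type*} [PseudoMetricSpace E] {γ : ℝ → E} {s : Set ℝ}

theorem lipschitzOnWith (hγ : IsArclengthParam γ s) : LipschitzOnWith 1 γ s := by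
  refine LipschitzOnWith.of_dist_le_mul fun u hu v hv => ?_
  wlog huv : u ≤ v generalizing u v
  · rw [dist_comm, dist_comm u]
    exact this v hv u hu (le_of_not_ge huv)
  have h := eVariationOn.edist_le γ (left_mem_Icc.2 huv) (right_mem_Icc.2 huv)
  rw [hγ hu hv huv, edist_dist, ENNReal.ofReal_le_ofReal_iff (sub_nonneg.2 huv)] at h
  rwa [NNReal.coe_one, one_mul, Real.dist_eq, abs_sub_comm, abs_of_nonneg (sub_nonneg.2 huv)]

theorem lipschitzWith_IccExtend {β : ℝ} (hβ : 0 ≤ β) (hγ : IsArclengthParam γ (Icc 0 β)) :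
    LipschitzWith 1 (IccExtend hβ (γ ∘ (↑))) := by
  have h := hγ.lipschitzOnWith.to_restrict.comp (LipschitzWith.projIcc hβ)
  rw [mul_one] at h
  exact h

theorem sub_le_sub_of_dist_le [s.OrdConnected] (hγ : IsArclengthParam γ s) {h : ℝ → ℝ}
    (hh : MonotoneOn h s) (hdist : ∀ x ∈ s, ∀ y ∈ s, x ≤ y → dist (γ x) (γ y) ≤ h y - h x)
    {u v : ℝ} (hu : u ∈ s) (hv : v ∈ s) (huv : u ≤ v) : v - u ≤ h v - h u := by
  have hsub : Icc u v ⊆ s := Set.Icc_subset s hu hv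
  have hvar : eVariationOn γ (Icc u v) ≤ eVariationOn h (Icc u v) :=
    eVariationOn_le_of_edist_le fun x hx y hy hxy => by
      rw [edist_dist, edist_dist, Real.dist_eq, abs_sub_comm,
        abs_of_nonneg (sub_nonneg.2 (hh (hsub hx) (hsub hy) hxy))]
      exact ENNReal.ofReal_le_ofReal (hdist x (hsub hx) y (hsub hy) hxy)
  have hmono : MonotoneOn h (Icc u v) := hh.mono hsub
  rwa [hγ hu hv huv, ← inter_self (Icc u v),
    hmono.eVariationOn_eq (left_mem_Icc.2 huv) (right_mem_Icc.2 huv),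
    ENNReal.ofReal_le_ofReal_iff (sub_nonneg.2 (hh hu hv huv))] at hvar

end IsArclengthParam

theorem exists_subseq_tendstoUniformlyOn_IccExtend {E : Type*} [MetricSpace E] [ProperSpace E]
    {β : ℕ → ℝ} (hβ0 : ∀ k, 0 ≤ β k) {γ : ℕ → ℝ → E}
    (harc : ∀ k, IsArclengthParam (γ k) (Icc 0 (β k)))
    (hγ0 : Bornology.IsBounded (range fun k => γ k 0)) (b : ℝ) :
    ∃ φ : ℕ → ℕ, StrictMono φ ∧ ∃ f : ℝ → E,
      TendstoUniformlyOn (fun k => IccExtend (hβ0 (φ k)) (γ (φ k) ∘ (↑))) f atTop (Icc 0 b) := by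
  set g : ℕ → ℝ → E := fun k => IccExtend (hβ0 k) (γ k ∘ (↑))
  have hlip : ∀ k, LipschitzWith 1 (g k) := fun k => (harc k).lipschitzWith_IccExtend (hβ0 k)
  obtain ⟨R, hR⟩ := hγ0.subset_closedBall (γ 0 0)
  refine exists_subseq_tendstoUniformlyOn_of_lipschitzOnWith isCompact_Icc
    (isCompact_closedBall (γ 0 0) (b + R)) (fun k => (hlip k).lipschitzOnWith) fun k t ht => ?_
  have hg0 : g k 0 = γ k 0 := IccExtend_of_mem _ _ (left_mem_Icc.2 (hβ0 k))
  have hdist : dist (g k t) (g k 0) ≤ b := by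
    have h := (hlip k).dist_le_mul t 0
    rw [NNReal.coe_one, one_mul, Real.dist_eq, sub_zero, abs_of_nonneg ht.1] at h
    exact h.trans ht.2
  calc dist (g k t) (γ 0 0) ≤ dist (g k t) (g k 0) + dist (g k 0) (γ 0 0) := dist_triangle _ _ _
    _ ≤ b + R := add_le_add hdist (hg0 ▸ hR (mem_range_self k))

section Minkowski

variable {n : ℕ}

theorem zero_mem_causalCone : (0 : Mink n) ∈ causalCone n := by
  simp [causalCone]

theorem Mink.continuous_time : Continuous fun y : Mink n => y 0 :=
  (EuclideanSpace.proj (0 : Fin (n + 1))).continuous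

theorem Mink.continuous_spatialNormSq : Continuous fun y : Mink n => ∑ i : Fin n, y i.succ ^ 2 :=
  continuous_finsetSum _ fun i _ => (EuclideanSpace.proj i.succ).continuous.pow 2

theorem isClosed_causalCone : IsClosed (causalCone n) :=
  isClosed_le (Real.continuous_sqrt.comp Mink.continuous_spatialNormSq) Mink.continuous_time

theorem continuous_qform : Continuous (qform n) :=
  (Mink.continuous_time.pow 2).sub Mink.continuous_spatialNormSq

theorem norm_le_sqrt_two_mul_of_mem_causalCone {y : Mink n} (hy : y ∈ causalCone n) :
    ‖y‖ ≤ √2 * y 0 := by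
  have h0 : 0 ≤ y 0 := (Real.sqrt_nonneg _).trans hy
  have hsp : ∑ i : Fin n, y i.succ ^ 2 ≤ y 0 ^ 2 :=
    (Real.sqrt_le_left h0).1 hy
  rw [EuclideanSpace.norm_eq, ← Real.sqrt_sq h0, ← Real.sqrt_mul zero_le_two]
  refine Real.sqrt_le_sqrt ?_
  simp only [Real.norm_eq_abs, sq_abs, Fin.sum_univ_succ]
  linarith

end Minkowski

namespace FDCausal

variable {n : ℕ} {γ : ℝ → Mink n} {s : Set ℝ}

theorem sub_mem_causalCone (hγ : FDCausal n γ s) {u v : ℝ} (hu : u ∈ s) (hv : v ∈ s)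
    (huv : u ≤ v) : γ v - γ u ∈ causalCone n := by
  rcases huv.eq_or_lt with rfl | hlt
  · simpa using zero_mem_causalCone
  · exact (hγ hu hv hlt).1

theorem monotoneOn_time (hγ : FDCausal n γ s) : MonotoneOn (fun t => γ t 0) s :=
  fun _ hu _ hv huv => sub_nonneg.1 ((Real.sqrt_nonneg _).trans (hγ.sub_mem_causalCone hu hv huv))

theorem dist_le_sqrt_two_mul_time (hγ : FDCausal n γ s) {u v : ℝ} (hu : u ∈ s) (hv : v ∈ s)
    (huv : u ≤ v) : dist (γ u) (γ v) ≤ √2 * γ v 0 - √2 * γ u 0 := by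
  rw [dist_comm, dist_eq_norm, ← mul_sub]
  exact norm_le_sqrt_two_mul_of_mem_causalCone (hγ.sub_mem_causalCone hu hv huv)

theorem sub_le_sqrt_two_mul_time [s.OrdConnected] (hγ : FDCausal n γ s)
    (harc : IsArclengthParam γ s) {u v : ℝ} (hu : u ∈ s) (hv : v ∈ s) (huv : u ≤ v) :
    v - u ≤ √2 * γ v 0 - √2 * γ u 0 :=
  harc.sub_le_sub_of_dist_le (h := fun t => √2 * γ t 0)
    (fun _ hx _ hy hxy => mul_le_mul_of_nonneg_left (hγ.monotoneOn_time hx hy hxy) (by positivity))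
    (fun _ hx _ hy hxy => hγ.dist_le_sqrt_two_mul_time hx hy hxy) hu hv huv

theorem of_tendsto_IccExtend {γ : ℕ → ℝ → Mink n} {β : ℕ → ℝ} (hβ0 : ∀ k, 0 ≤ β k)
    (hγ : ∀ k, FDCausal n (γ k) (Icc 0 (β k))) (harc : ∀ k, IsArclengthParam (γ k) (Icc 0 (β k)))
    {b : ℝ} (hβ : Tendsto β atTop (𝓝 b)) {f : ℝ → Mink n}
    (hf : ∀ t ∈ Icc 0 b, Tendsto (fun k => IccExtend (hβ0 k) (γ k ∘ (↑)) t) atTop (𝓝 (f t))) :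
    FDCausal n f (Icc 0 b) := by
  intro t₁ ht₁ t₂ ht₂ hlt
  let p : ℕ → ℝ → ℝ := fun k t => projIcc 0 (β k) (hβ0 k) t
  have hpmem : ∀ k t, p k t ∈ Icc 0 (β k) := fun k t => (projIcc _ _ _ t).2
  have hp : ∀ t ∈ Icc 0 b, Tendsto (fun k => p k t) atTop (𝓝 t) := fun t ht => by
    simpa [p, coe_projIcc, ht.1, ht.2] using
      (tendsto_const_nhds (x := (0 : ℝ))).max (hβ.min (tendsto_const_nhds (x := t)))
  have hple : ∀ k, p k t₁ ≤ p k t₂ := fun k => monotone_projIcc _ hlt.le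
  have hcone : f t₂ - f t₁ ∈ causalCone n :=
    isClosed_causalCone.mem_of_tendsto ((hf t₂ ht₂).sub (hf t₁ ht₁)) (Eventually.of_forall
      fun k => (hγ k).sub_mem_causalCone (hpmem k t₁) (hpmem k t₂) (hple k))
  have hgrowth : t₂ - t₁ ≤ √2 * f t₂ 0 - √2 * f t₁ 0 := by
    refine le_of_tendsto_of_tendsto' ((hp t₂ ht₂).sub (hp t₁ ht₁)) ?_
      fun k => (hγ k).sub_le_sqrt_two_mul_time (harc k) (hpmem k t₁) (hpmem k t₂) (hple k)
    exact ((((Mink.continuous_time.tendsto _).comp (hf t₂ ht₂)).const_mul _).sub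
      (((Mink.continuous_time.tendsto _).comp (hf t₁ ht₁)).const_mul _))
  refine ⟨hcone, fun heq => ?_⟩
  rw [heq] at hgrowth
  linarith

end FDCausal

theorem Fin.strictMono_update_last {α : Type*} [Preorder α] {m : ℕ} {t : Fin (m + 1) → α}
    (ht : StrictMono t) {c : α} (hc : ∀ j : Fin m, t j.castSucc < c) :
    StrictMono (Function.update t (Fin.last m) c) := by
  intro i j hij
  have hi : i ≠ Fin.last m := (hij.trans_le (Fin.le_last j)).ne
  by_cases hj : j = Fin.last m
  · subst hj
    simpa [Function.update_of_ne hi] using hc (i.castPred hi)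
  · simpa [Function.update_of_ne hi, Function.update_of_ne hj] using ht hij

section LLength

variable {n : ℕ}

theorem lLength_nonneg (γ : ℝ → Mink n) (a b : ℝ) : 0 ≤ LLength n γ a b :=
  Real.sInf_nonneg (by rintro _ ⟨m, t, -, -, -, rfl⟩; positivity)

theorem lLength_le_sum (γ : ℝ → Mink n) {m : ℕ} {t : Fin (m + 1) → ℝ} (ht : StrictMono t) :
    LLength n γ (t 0) (t (Fin.last m)) ≤
      ∑ i : Fin m, √(qform n (γ (t i.succ) - γ (t i.castSucc))) :=
  csInf_le ⟨0, by rintro _ ⟨m, t, -, -, -, rfl⟩; positivity⟩ ⟨m, t, ht, rfl, rfl, rfl⟩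

/-- Each partition sum of `f` is the limit of partition sums of the `δ k`, with the last partition
point moved to `β k`. -/
theorem limsup_lLength_le {δ : ℕ → ℝ → Mink n} {f : ℝ → Mink n} {a b : ℝ} (hab : a < b)
    {β : ℕ → ℝ} (hβ : Tendsto β atTop (𝓝 b))
    (hδ : ∀ t ∈ Ico a b, Tendsto (fun k => δ k t) atTop (𝓝 (f t)))
    (hδβ : Tendsto (fun k => δ k (β k)) atTop (𝓝 (f b))) :
    limsup (fun k => LLength n (δ k) a (β k)) atTop ≤ LLength n f a b := by
  refine le_csInf ⟨_, 1, ![a, b], by simp [Fin.strictMono_iff_lt_succ, hab], rfl, rfl, rfl⟩ ?_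
  rintro _ ⟨m, t, ht, rfl, rfl, rfl⟩
  have hm : m ≠ 0 := by
    rintro rfl
    exact hab.ne rfl
  let t' : ℕ → Fin (m + 1) → ℝ := fun k => Function.update t (Fin.last m) (β k)
  have hmono : ∀ᶠ k in atTop, StrictMono (t' k) := by
    have : ∀ᶠ k in atTop, ∀ j : Fin m, t j.castSucc < β k :=
      eventually_all.2 fun j => hβ.eventually (lt_mem_nhds (ht (Fin.castSucc_lt_last j)))
    filter_upwards [this] with k hk using Fin.strictMono_update_last ht hk
  have hconv : ∀ j, Tendsto (fun k => δ k (t' k j)) atTop (𝓝 (f (t j))) := by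
    intro j
    by_cases hj : j = Fin.last m
    · subst hj
      simpa [t'] using hδβ
    · simpa [t', Function.update_of_ne hj] using
        hδ (t j) ⟨ht.monotone (Fin.zero_le j), ht ((Fin.le_last j).lt_of_ne hj)⟩
  have hsum : Tendsto (fun k => ∑ i : Fin m, √(qform n (δ k (t' k i.succ) - δ k (t' k i.castSucc))))
      atTop (𝓝 (∑ i : Fin m, √(qform n (f (t i.succ) - f (t i.castSucc))))) :=
    tendsto_finsetSum _ fun i _ => ((Real.continuous_sqrt.comp continuous_qform).tendsto _).comp
      ((hconv _).sub (hconv _))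
  have h0 : (0 : Fin (m + 1)) ≠ Fin.last m := Fin.ext_iff.not.2 (Ne.symm hm)
  calc limsup (fun k => LLength n (δ k) (t 0) (β k)) atTop
      ≤ limsup (fun k => ∑ i : Fin m, √(qform n (δ k (t' k i.succ) - δ k (t' k i.castSucc))))
          atTop := by
        refine limsup_le_limsup (hmono.mono fun k hk => ?_)
          (isCoboundedUnder_le_of_le _ fun k => lLength_nonneg _ _ _) hsum.isBoundedUnder_le
        simpa [t', Function.update_of_ne h0] using lLength_le_sum (δ k) hk
    _ = _ := hsum.limsup_eq

end LLength

theorem limit_curve_two_endpoints_finite_general (n : ℕ)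
    (bn : ℕ → ℝ) (hbn : ∀ m, 0 ≤ bn m)
    (γn : ℕ → ℝ → Mink n)
    (hcausal : ∀ m, FDCausal n (γn m) (Set.Icc 0 (bn m)))
    (harc : ∀ m, ∀ ⦃s s'⦄, s ∈ Set.Icc 0 (bn m) → s' ∈ Set.Icc 0 (bn m) → s ≤ s' →
      eVariationOn (γn m) (Set.Icc s s') = ENNReal.ofReal (s' - s))
    (x z : Mink n)
    (hx : Filter.Tendsto (fun m => γn m 0) Filter.atTop (nhds x))
    (hz : Filter.Tendsto (fun m => γn m (bn m)) Filter.atTop (nhds z))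
    (b : ℝ) (hb : 0 < b)
    (hbconv : Filter.Tendsto bn Filter.atTop (nhds b)) :
    ∃ φ : ℕ → ℕ, StrictMono φ ∧ ∃ γ : ℝ → Mink n,
      FDCausal n γ (Set.Icc 0 b) ∧ γ 0 = x ∧ γ b = z ∧
      (∀ ε > (0 : ℝ), ∃ N : ℕ, ∀ k ≥ N,
        ∀ t ∈ Set.Icc 0 (min b (bn (φ k))), ‖γ t - γn (φ k) t‖ < ε) ∧
      Filter.limsup (fun k => LLength n (γn (φ k)) 0 (bn (φ k))) Filter.atTop ≤
        LLength n γ 0 b ∧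
      z - x ∈ causalCone n ∧ z ≠ x := by
  have harc' : ∀ m, IsArclengthParam (γn m) (Icc 0 (bn m)) := harc
  set g : ℕ → ℝ → Mink n := fun m => IccExtend (hbn m) (γn m ∘ (↑))
  have hg : ∀ m, ∀ t ∈ Icc 0 (bn m), g m t = γn m t := fun m t ht => IccExtend_of_mem _ _ ht
  obtain ⟨φ, hφ, f, hf⟩ :=
    exists_subseq_tendstoUniformlyOn_IccExtend hbn harc' (isBounded_range_of_tendsto _ hx) b
  have hfg : ∀ t ∈ Icc 0 b, Tendsto (fun k => g (φ k) t) atTop (𝓝 (f t)) := fun t ht =>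
    hf.tendsto_at ht
  have hβ : Tendsto (bn ∘ φ) atTop (𝓝 b) := hbconv.comp hφ.tendsto_atTop
  have hf0 : f 0 = x := tendsto_nhds_unique (hfg 0 (left_mem_Icc.2 hb.le))
    (by simpa [Function.comp_def, hg _ 0 (left_mem_Icc.2 (hbn _))] using hx.comp hφ.tendsto_atTop)
  have hfb : f b = z := by
    have hz' : Tendsto (fun k => g (φ k) (bn (φ k))) atTop (𝓝 z) := by
      simpa [Function.comp_def, hg _ _ (right_mem_Icc.2 (hbn _))] using hz.comp hφ.tendsto_atTop
    exact tendsto_nhds_unique (hfg b (right_mem_Icc.2 hb.le))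
      (hz'.congr_dist_of_lipschitzWith (fun k => (harc' (φ k)).lipschitzWith_IccExtend (hbn _))
        (tendsto_iff_dist_tendsto_zero.1 hβ))
  have hfc : FDCausal n f (Icc 0 b) := FDCausal.of_tendsto_IccExtend (fun k => hbn (φ k))
    (fun k => hcausal (φ k)) (fun k => harc' (φ k)) hβ hfg
  have hzx := hfc (left_mem_Icc.2 hb.le) (right_mem_Icc.2 hb.le) hb
  rw [hf0, hfb] at hzx
  refine ⟨φ, hφ, f, hfc, hf0, hfb, fun ε hε => ?_, ?_, hzx⟩
  · obtain ⟨N, hN⟩ := eventually_atTop.1 (tendstoUniformlyOn_iff.1 hf ε hε)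
    refine ⟨N, fun k hk t ht => ?_⟩
    rw [← dist_eq_norm, ← hg _ t ⟨ht.1, ht.2.trans (min_le_right _ _)⟩]
    exact hN k hk t ⟨ht.1, ht.2.trans (min_le_left _ _)⟩
  · refine limsup_lLength_le hb hβ (fun t ht => ?_) (hfb ▸ hz.comp hφ.tendsto_atTop)
    refine (hfg t (Ico_subset_Icc_self ht)).congr' ?_
    filter_upwards [hβ.eventually (lt_mem_nhds ht.2)] with k hk
    exact hg _ t ⟨ht.1, hk.le⟩

/-- The Minkowski-space instance of the first bullet of case (2) of the limit curve
theorem: future-directed causal curves `γₙ : [0, bₙ] → ℝ × ℝⁿ` parametrized by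
Euclidean arclength with `γₙ(0) → x`, `γₙ(bₙ) → z`, `bₙ → b ∈ (0, ∞)` admit a
subsequence converging to a future-directed causal curve `γ : [0, b] → ℝ × ℝⁿ`
connecting `x` to `z`, with `limsup L(γₖ) ≤ L(γ)`; in particular `z − x ∈ C`, `z ≠ x`. -/
theorem limit_curve_two_endpoints_finite (n : ℕ) (hn : 1 ≤ n)
    (bn : ℕ → ℝ) (hbn : ∀ m, 0 ≤ bn m)
    (γn : ℕ → ℝ → Mink n)
    (hcausal : ∀ m, FDCausal n (γn m) (Set.Icc 0 (bn m)))
    (harc : ∀ m, ∀ ⦃s s'⦄, s ∈ Set.Icc 0 (bn m) → s' ∈ Set.Icc 0 (bn m) → s ≤ s' →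
      eVariationOn (γn m) (Set.Icc s s') = ENNReal.ofReal (s' - s))
    (x z : Mink n)
    (hx : Filter.Tendsto (fun m => γn m 0) Filter.atTop (nhds x))
    (hz : Filter.Tendsto (fun m => γn m (bn m)) Filter.atTop (nhds z))
    (b : ℝ) (hb : 0 < b)
    (hbconv : Filter.Tendsto bn Filter.atTop (nhds b)) :
    ∃ φ : ℕ → ℕ, StrictMono φ ∧ ∃ γ : ℝ → Mink n,
      FDCausal n γ (Set.Icc 0 b) ∧ γ 0 = x ∧ γ b = z ∧
      (∀ ε > (0 : ℝ), ∃ N : ℕ, ∀ k ≥ N,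
        ∀ t ∈ Set.Icc 0 (min b (bn (φ k))), ‖γ t - γn (φ k) t‖ < ε) ∧
      Filter.limsup (fun k => LLength n (γn (φ k)) 0 (bn (φ k))) Filter.atTop ≤
        LLength n γ 0 b ∧
      z - x ∈ causalCone n ∧ z ≠ x :=
  limit_curve_two_endpoints_finite_general n bn hbn γn hcausal harc x z hx hz b hb hbconv
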